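/- arXiv:2307.07804 — 3 statements merged into one kernel-verified Lean document; each statement's English description precedes it below -/
import Mathlib

section
/- Let n ≥ 1. The n+1 elements w = (0,−1;1,0) and y(p^j) = (1,0;p^j,1) for j = 1,…,n form a complete and irredundant set of representatives for the double cosets K₀(pⁿ)\K/K₀(pⁿ): every g ∈ K = GL₂(ℤₚ) lies in K₀(pⁿ)·h·K₀(pⁿ) for exactly one h among w, y(p), y(p²), …, y(pⁿ). -/
/-- `K = GL₂(ℤₚ)`, realized as the set of 2×2 matrices over `ℤ_[p]` with unit determinant. -/
def Kfull (p : ℕ) [Fact p.Prime] : Set (Matrix (Fin 2) (Fin 2) ℤ_[p]) :=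
  {g | IsUnit g.det}

/-- `K₀(pⁿ) = {(a,b;c,d) ∈ K : c ∈ pⁿℤₚ}`. -/
def K0 (p : ℕ) [Fact p.Prime] (n : ℕ) : Set (Matrix (Fin 2) (Fin 2) ℤ_[p]) :=
  {g | IsUnit g.det ∧ (p : ℤ_[p]) ^ n ∣ g 1 0}

/-- `w = (0,−1;1,0)`. -/
noncomputable def wMat (p : ℕ) [Fact p.Prime] : Matrix (Fin 2) (Fin 2) ℤ_[p] := !![0, -1; 1, 0]

/-- `y(t) = (1,0;t,1)`. -/
noncomputable def yMat (p : ℕ) [Fact p.Prime] (t : ℤ_[p]) : Matrix (Fin 2) (Fin 2) ℤ_[p] := !![1, 0; t, 1]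

/-!
The invariant of the double coset of `g` is the ideal `(g₁₀, pⁿ)`: elements of `K₀(pⁿ)` have unit
diagonal entries, so multiplying by them on either side does not change which `pʲ` (`j ≤ n`) divide
the lower left entry. The `i`-th representative has lower left entry `pⁱ`, which gives uniqueness.
For existence, write `g₁₀ = pʲu` with `u` a unit. If `j = 0`, upper triangular matrices move `g` to
`w`. Otherwise `g₀₀` is a unit and `g = y(g₁₀/g₀₀)·U` with `U` upper triangular, and
`y(pʲs) = d(s)⁻¹ y(pʲ) d(s)` for units `s`; when `pⁿ ∣ g₁₀`, already `y(pⁿ) ∈ K₀(pⁿ)`.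
-/

open DoubleCoset

namespace Matrix

variable {R : Type*} [CommRing R]

theorem isUnit_diag_of_isUnit_det [IsLocalRing R] {g : Matrix (Fin 2) (Fin 2) R}
    (hg : IsUnit g.det) (hc : ¬IsUnit (g 1 0)) : IsUnit (g 0 0) ∧ IsUnit (g 1 1) := by
  rw [det_fin_two, sub_eq_add_neg] at hg
  have hbc : ¬IsUnit (-(g 0 1 * g 1 0)) := by
    rw [IsUnit.neg_iff]; exact mul_mem_nonunits_right hc
  exact IsUnit.mul_iff.mp ((IsLocalRing.isUnit_or_isUnit_of_isUnit_add hg).resolve_right hbc)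

theorem dvd_mul_apply_one_zero_iff_left {d : R} {k g : Matrix (Fin 2) (Fin 2) R}
    (hk : IsUnit (k 1 1)) (hd : d ∣ k 1 0) : d ∣ (k * g) 1 0 ↔ d ∣ g 1 0 := by
  rw [mul_apply, Fin.sum_univ_two, dvd_add_right (hd.mul_right _), hk.dvd_mul_left]

theorem dvd_mul_apply_one_zero_iff_right {d : R} {k g : Matrix (Fin 2) (Fin 2) R}
    (hk : IsUnit (k 0 0)) (hd : d ∣ k 1 0) : d ∣ (g * k) 1 0 ↔ d ∣ g 1 0 := by
  rw [mul_apply, Fin.sum_univ_two, dvd_add_left (hd.mul_left _), hk.dvd_mul_right]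

end Matrix

theorem PadicInt.not_isUnit_iff_dvd {p : ℕ} [Fact p.Prime] {x : ℤ_[p]} :
    ¬IsUnit x ↔ (p : ℤ_[p]) ∣ x :=
  PadicInt.not_isUnit_iff.trans (PadicInt.norm_lt_one_iff_dvd x)

variable {p : ℕ} [Fact p.Prime] {n : ℕ}

theorem mul_mem_K0 {k k' : Matrix (Fin 2) (Fin 2) ℤ_[p]} (hk : k ∈ K0 p n) (hk' : k' ∈ K0 p n) :
    k * k' ∈ K0 p n := by
  refine ⟨by rw [Matrix.det_mul]; exact hk.1.mul hk'.1, ?_⟩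
  rw [Matrix.mul_apply, Fin.sum_univ_two]
  exact dvd_add (hk.2.mul_right _) (hk'.2.mul_left _)

theorem mem_K0_of_apply_one_zero_eq_zero {k : Matrix (Fin 2) (Fin 2) ℤ_[p]} (hk : IsUnit k.det)
    (h : k 1 0 = 0) : k ∈ K0 p n :=
  ⟨hk, h ▸ dvd_zero _⟩

theorem isUnit_diag_of_mem_K0 (hn : 1 ≤ n) {k : Matrix (Fin 2) (Fin 2) ℤ_[p]} (hk : k ∈ K0 p n) :
    IsUnit (k 0 0) ∧ IsUnit (k 1 1) :=
  Matrix.isUnit_diag_of_isUnit_det hk.1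
    (PadicInt.not_isUnit_iff_dvd.mpr ((dvd_pow_self _ (by omega)).trans hk.2))

theorem det_yMat (t : ℤ_[p]) : (yMat p t).det = 1 := by
  simp [yMat, Matrix.det_fin_two_of]

theorem yMat_mem_K0 {t : ℤ_[p]} (ht : (p : ℤ_[p]) ^ n ∣ t) : yMat p t ∈ K0 p n :=
  ⟨by simp [det_yMat], by simpa [yMat] using ht⟩

theorem yMat_zero : yMat p 0 = 1 := by
  simp [yMat, Matrix.one_fin_two]

theorem yMat_mul_yMat (s t : ℤ_[p]) : yMat p s * yMat p t = yMat p (s + t) := by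
  simp [yMat]

theorem yMat_mul_unit (t : ℤ_[p]) (u : ℤ_[p]ˣ) :
    yMat p (t * u) = !![(↑u⁻¹ : ℤ_[p]), 0; 0, 1] * yMat p t * !![(u : ℤ_[p]), 0; 0, 1] := by
  simp [yMat]

theorem exists_eq_yMat_mul_of_apply_zero_zero {g : Matrix (Fin 2) (Fin 2) ℤ_[p]}
    (hg : IsUnit g.det) {a : ℤ_[p]ˣ} (ha : g 0 0 = a) :
    ∃ k ∈ K0 p n, g = yMat p (g 1 0 * ↑a⁻¹) * k := by
  have hLU : g = yMat p (g 1 0 * ↑a⁻¹) *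
      !![g 0 0, g 0 1; 0, g 1 1 - g 1 0 * ↑a⁻¹ * g 0 1] := by
    ext i j
    fin_cases i <;> fin_cases j <;> simp [yMat, ha]
  refine ⟨_, mem_K0_of_apply_one_zero_eq_zero ?_ rfl, hLU⟩
  rwa [hLU, Matrix.det_mul, det_yMat, one_mul] at hg

theorem mem_doubleCoset_wMat {g : Matrix (Fin 2) (Fin 2) ℤ_[p]} (hg : IsUnit g.det)
    (hc : IsUnit (g 1 0)) : g ∈ doubleCoset (wMat p) (K0 p n) (K0 p n) := by
  obtain ⟨c, hc⟩ := hc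
  set α := g 0 0 * ↑c⁻¹
  have hcc : (↑c⁻¹ : ℤ_[p]) * c = 1 := c.inv_mul
  refine mem_doubleCoset.mpr ⟨!![1, α; 0, 1], mem_K0_of_apply_one_zero_eq_zero (by simp) rfl,
    !![g 1 0, g 1 1; 0, α * g 1 1 - g 0 1], mem_K0_of_apply_one_zero_eq_zero ?_ rfl, ?_⟩
  · convert hg using 1
    rw [Matrix.det_fin_two_of, Matrix.det_fin_two, ← hc]
    linear_combination (g 0 0 * g 1 1) * hcc
  · ext i j
    fin_cases i <;> fin_cases j <;> simp [wMat, α, ← hc]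

theorem mem_doubleCoset_yMat_of_dvd {g : Matrix (Fin 2) (Fin 2) ℤ_[p]} (hg : IsUnit g.det)
    (hc : (p : ℤ_[p]) ^ n ∣ g 1 0) :
    g ∈ doubleCoset (yMat p ((p : ℤ_[p]) ^ n)) (K0 p n) (K0 p n) := by
  refine mem_doubleCoset.mpr ⟨g, ⟨hg, hc⟩, yMat p (-(p : ℤ_[p]) ^ n), yMat_mem_K0 (by simp), ?_⟩
  rw [mul_assoc, yMat_mul_yMat, add_neg_cancel, yMat_zero, mul_one]

theorem mem_doubleCoset_yMat_of_eq_pow_mul {g : Matrix (Fin 2) (Fin 2) ℤ_[p]} (hg : IsUnit g.det)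
    {j : ℕ} (hj : j ≠ 0) {u : ℤ_[p]ˣ} (hc : g 1 0 = (p : ℤ_[p]) ^ j * u) :
    g ∈ doubleCoset (yMat p ((p : ℤ_[p]) ^ j)) (K0 p n) (K0 p n) := by
  have hcp : (p : ℤ_[p]) ∣ g 1 0 := hc ▸ (dvd_pow_self _ hj).mul_right _
  obtain ⟨a, ha⟩ := (Matrix.isUnit_diag_of_isUnit_det hg (PadicInt.not_isUnit_iff_dvd.mpr hcp)).1
  obtain ⟨k, hk, hgk⟩ := exists_eq_yMat_mul_of_apply_zero_zero (n := n) hg ha.symm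
  rw [hgk, hc, mul_assoc, ← Units.val_mul, yMat_mul_unit, mul_assoc]
  exact mem_doubleCoset.mpr ⟨_, mem_K0_of_apply_one_zero_eq_zero (by simp) rfl, _,
    mul_mem_K0 (mem_K0_of_apply_one_zero_eq_zero (by simp) rfl) hk, rfl⟩

theorem dvd_apply_one_zero_iff_of_mem_doubleCoset (hn : 1 ≤ n)
    {g h : Matrix (Fin 2) (Fin 2) ℤ_[p]} (hgh : g ∈ doubleCoset h (K0 p n) (K0 p n))
    {j : ℕ} (hj : j ≤ n) : (p : ℤ_[p]) ^ j ∣ g 1 0 ↔ (p : ℤ_[p]) ^ j ∣ h 1 0 := by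
  obtain ⟨k₁, hk₁, k₂, hk₂, rfl⟩ := mem_doubleCoset.mp hgh
  have hpow {k} (hk : k ∈ K0 p n) : (p : ℤ_[p]) ^ j ∣ k 1 0 := (pow_dvd_pow _ hj).trans hk.2
  rw [Matrix.dvd_mul_apply_one_zero_iff_right (isUnit_diag_of_mem_K0 hn hk₂).1 (hpow hk₂),
    Matrix.dvd_mul_apply_one_zero_iff_left (isUnit_diag_of_mem_K0 hn hk₁).2 (hpow hk₁)]

variable (p) in
/-- `w` plays the role of `y(p⁰)`: it is the representative whose lower left entry is a unit. -/
noncomputable def cosetRep (i : ℕ) : Matrix (Fin 2) (Fin 2) ℤ_[p] :=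
  if i = 0 then wMat p else yMat p ((p : ℤ_[p]) ^ i)

theorem cosetRep_apply_one_zero (i : ℕ) : cosetRep p i 1 0 = (p : ℤ_[p]) ^ i := by
  unfold cosetRep
  split_ifs with hi
  · simp [wMat, hi]
  · simp [yMat]

theorem cosetRep_of_ne_zero {i : ℕ} (hi : i ≠ 0) : cosetRep p i = yMat p ((p : ℤ_[p]) ^ i) :=
  if_neg hi

theorem exists_mem_doubleCoset_cosetRep (hn : 1 ≤ n) {g : Matrix (Fin 2) (Fin 2) ℤ_[p]}
    (hg : IsUnit g.det) : ∃ i ≤ n, g ∈ doubleCoset (cosetRep p i) (K0 p n) (K0 p n) := by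
  by_cases hpn : (p : ℤ_[p]) ^ n ∣ g 1 0
  · refine ⟨n, le_rfl, ?_⟩
    rw [cosetRep_of_ne_zero (by omega)]
    exact mem_doubleCoset_yMat_of_dvd hg hpn
  have hc0 : g 1 0 ≠ 0 := fun h => hpn (h ▸ dvd_zero _)
  set v := (g 1 0).valuation
  have hc : g 1 0 = (p : ℤ_[p]) ^ v * PadicInt.unitCoeff hc0 := by
    rw [mul_comm]; exact PadicInt.unitCoeff_spec hc0
  have hvn : v ≤ n := by
    by_contra! hv
    exact hpn (hc ▸ (pow_dvd_pow _ hv.le).mul_right _)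
  refine ⟨v, hvn, ?_⟩
  by_cases hv : v = 0
  · rw [hv, cosetRep]
    exact mem_doubleCoset_wMat hg (by rw [hc, hv, pow_zero, one_mul]; exact Units.isUnit _)
  · rw [cosetRep_of_ne_zero hv]
    exact mem_doubleCoset_yMat_of_eq_pow_mul hg hv hc

theorem eq_of_mem_doubleCoset_cosetRep (hn : 1 ≤ n) {g : Matrix (Fin 2) (Fin 2) ℤ_[p]}
    {i i' : ℕ} (hi : i ≤ n) (hi' : i' ≤ n)
    (hgi : g ∈ doubleCoset (cosetRep p i) (K0 p n) (K0 p n))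
    (hgi' : g ∈ doubleCoset (cosetRep p i') (K0 p n) (K0 p n)) : i = i' := by
  have key {j} (hj : j ≤ n) :
      (p : ℤ_[p]) ^ j ∣ cosetRep p i 1 0 ↔ (p : ℤ_[p]) ^ j ∣ cosetRep p i' 1 0 := by
    rw [← dvd_apply_one_zero_iff_of_mem_doubleCoset hn hgi hj,
      dvd_apply_one_zero_iff_of_mem_doubleCoset hn hgi' hj]
  have hp : ¬IsUnit (p : ℤ_[p]) := PadicInt.not_isUnit_iff_dvd.mpr dvd_rfl
  simp only [cosetRep_apply_one_zero, pow_dvd_pow_iff (NeZero.ne _) hp] at key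
  exact le_antisymm ((key hi).mp le_rfl) ((key hi').mpr le_rfl)

/-- The `n+1` elements `w, y(p), y(p²), …, y(pⁿ)` form a complete and irredundant set of
representatives for the double cosets `K₀(pⁿ)\K/K₀(pⁿ)`: every `g ∈ K` lies in
`K₀(pⁿ)·h·K₀(pⁿ)` for exactly one `h` among them. -/
theorem stmt0 (p n : ℕ) [Fact p.Prime] (hn : 1 ≤ n) :
    ∀ g ∈ Kfull p, ∃! i : Fin (n + 1),
      ∃ k₁ ∈ K0 p n, ∃ k₂ ∈ K0 p n,
        g = k₁ * (if (i : ℕ) = 0 then wMat p else yMat p ((p : ℤ_[p]) ^ (i : ℕ))) * k₂ := by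
  intro g hg
  obtain ⟨i, hin, hi⟩ := exists_mem_doubleCoset_cosetRep hn hg
  refine ⟨⟨i, by omega⟩, mem_doubleCoset.mp hi, fun i' hi' => Fin.ext ?_⟩
  exact eq_of_mem_doubleCoset_cosetRep hn i'.is_le hin
    (mem_doubleCoset.mpr hi' : g ∈ doubleCoset (cosetRep p i') (K0 p n) (K0 p n)) hi
end

section
/- Let n ≥ 1. For every m with 0 ≤ m ≤ n one has {k ∈ K₀(pⁿ) : y(p^m)⁻¹ k y(p^m) ∈ K₀(pⁿ)} = {(a,b;c,d) ∈ K₀(pⁿ) : a − d + p^m b ∈ p^{n−m}ℤₚ}, and moreover {k ∈ K₀(pⁿ) : w⁻¹ k w ∈ K₀(pⁿ)} = {(a,b;c,d) ∈ K₀(pⁿ) : b ∈ pⁿℤₚ}; in particular the latter set contains every diagonal matrix of K. -/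
/-!
Conjugation preserves the determinant, so for `k ∈ K₀(pⁿ)` only the lower-left entry of the
conjugate matters. For `y(t)` it is `c - t (a - d + t b)` and for `w` it is `-b`; since `pⁿ ∣ c`,
with `t = p^m` the condition reduces to `p^{n-m} ∣ a - d + p^m b` after cancelling `p^m`.
-/

section TwoByTwo

variable {R : Type*} [CommRing R]

lemma inv_lowerUnitriangular (t : R) :
    (!![1, 0; t, 1] : Matrix (Fin 2) (Fin 2) R)⁻¹ = !![1, 0; -t, 1] :=
  Matrix.inv_eq_right_inv (by simp [Matrix.one_fin_two])

lemma inv_rotation :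
    (!![0, -1; 1, 0] : Matrix (Fin 2) (Fin 2) R)⁻¹ = !![0, 1; -1, 0] :=
  Matrix.inv_eq_right_inv (by simp [Matrix.one_fin_two])

lemma lowerUnitriangular_conj_apply_one_zero (t : R) (k : Matrix (Fin 2) (Fin 2) R) :
    (!![1, 0; t, 1]⁻¹ * k * !![1, 0; t, 1] : Matrix (Fin 2) (Fin 2) R) 1 0 =
      k 1 0 - t * (k 0 0 - k 1 1 + t * k 0 1) := by
  rw [inv_lowerUnitriangular]
  simp [Matrix.mul_apply, Fin.sum_univ_two, Matrix.vecMul, dotProduct]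
  ring

lemma rotation_conj_apply_one_zero (k : Matrix (Fin 2) (Fin 2) R) :
    (!![0, -1; 1, 0]⁻¹ * k * !![0, -1; 1, 0] : Matrix (Fin 2) (Fin 2) R) 1 0 = -k 0 1 := by
  rw [inv_rotation]
  simp [Matrix.mul_apply, Fin.sum_univ_two, Matrix.vecMul, dotProduct]

end TwoByTwo

lemma pow_dvd_pow_mul_iff {M : Type*} [MonoidWithZero M] [IsLeftCancelMulZero M] {a : M}
    (ha : a ≠ 0) {m n : ℕ} (hmn : m ≤ n) (x : M) : a ^ n ∣ a ^ m * x ↔ a ^ (n - m) ∣ x := by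
  rw [← Nat.add_sub_cancel' hmn, pow_add, Nat.add_sub_cancel_left]
  exact mul_dvd_mul_iff_left (pow_ne_zero m ha)

section K0

variable {p : ℕ} [Fact p.Prime] {n : ℕ}

lemma conj_mem_K0_iff {g : Matrix (Fin 2) (Fin 2) ℤ_[p]} (hg : IsUnit g)
    (k : Matrix (Fin 2) (Fin 2) ℤ_[p]) :
    g⁻¹ * k * g ∈ K0 p n ↔ IsUnit k.det ∧ (p : ℤ_[p]) ^ n ∣ (g⁻¹ * k * g) 1 0 := by
  rw [K0, Set.mem_ofPred_eq, Matrix.det_conj' hg]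

lemma isUnit_yMat (t : ℤ_[p]) : IsUnit (yMat p t) := by
  simp [Matrix.isUnit_iff_isUnit_det, yMat, Matrix.det_fin_two_of]

lemma isUnit_wMat : IsUnit (wMat p) := by
  simp [Matrix.isUnit_iff_isUnit_det, wMat, Matrix.det_fin_two_of]

lemma setOf_mem_K0_and_yMat_conj_mem_K0 {m : ℕ} (hmn : m ≤ n) :
    {k : Matrix (Fin 2) (Fin 2) ℤ_[p] |
        k ∈ K0 p n ∧ (yMat p ((p : ℤ_[p]) ^ m))⁻¹ * k * yMat p ((p : ℤ_[p]) ^ m) ∈ K0 p n} =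
      {k : Matrix (Fin 2) (Fin 2) ℤ_[p] |
        k ∈ K0 p n ∧ (p : ℤ_[p]) ^ (n - m) ∣ (k 0 0 - k 1 1 + (p : ℤ_[p]) ^ m * k 0 1)} := by
  have hp : (p : ℤ_[p]) ≠ 0 := Nat.cast_ne_zero.mpr (Fact.out : p.Prime).ne_zero
  ext k
  simp only [Set.mem_ofPred_eq, and_congr_right_iff]
  rintro ⟨hdet, hc⟩
  rw [conj_mem_K0_iff (isUnit_yMat _), yMat, lowerUnitriangular_conj_apply_one_zero,
    dvd_sub_right hc, pow_dvd_pow_mul_iff hp hmn, and_iff_right hdet]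

lemma setOf_mem_K0_and_wMat_conj_mem_K0 :
    {k : Matrix (Fin 2) (Fin 2) ℤ_[p] | k ∈ K0 p n ∧ (wMat p)⁻¹ * k * wMat p ∈ K0 p n} =
      {k : Matrix (Fin 2) (Fin 2) ℤ_[p] | k ∈ K0 p n ∧ (p : ℤ_[p]) ^ n ∣ k 0 1} := by
  ext k
  simp only [Set.mem_ofPred_eq, and_congr_right_iff]
  rintro ⟨hdet, -⟩
  rw [conj_mem_K0_iff isUnit_wMat, wMat, rotation_conj_apply_one_zero, dvd_neg,
    and_iff_right hdet]

end K0

theorem stmt2_general (p n : ℕ) [Fact p.Prime] :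
    (∀ m : ℕ, m ≤ n →
      {k : Matrix (Fin 2) (Fin 2) ℤ_[p] |
          k ∈ K0 p n ∧ (yMat p ((p : ℤ_[p]) ^ m))⁻¹ * k * yMat p ((p : ℤ_[p]) ^ m) ∈ K0 p n} =
        {k : Matrix (Fin 2) (Fin 2) ℤ_[p] |
          k ∈ K0 p n ∧ (p : ℤ_[p]) ^ (n - m) ∣ (k 0 0 - k 1 1 + (p : ℤ_[p]) ^ m * k 0 1)}) ∧
    ({k : Matrix (Fin 2) (Fin 2) ℤ_[p] |
          k ∈ K0 p n ∧ (wMat p)⁻¹ * k * wMat p ∈ K0 p n} =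
        {k : Matrix (Fin 2) (Fin 2) ℤ_[p] |
          k ∈ K0 p n ∧ (p : ℤ_[p]) ^ n ∣ k 0 1}) ∧
    (∀ a d : ℤ_[p], IsUnit a → IsUnit d →
      (!![a, 0; 0, d] : Matrix (Fin 2) (Fin 2) ℤ_[p]) ∈
        {k : Matrix (Fin 2) (Fin 2) ℤ_[p] |
          k ∈ K0 p n ∧ (wMat p)⁻¹ * k * wMat p ∈ K0 p n}) := by
  refine ⟨fun m => setOf_mem_K0_and_yMat_conj_mem_K0, setOf_mem_K0_and_wMat_conj_mem_K0,
    fun a d ha hd => ?_⟩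
  rw [setOf_mem_K0_and_wMat_conj_mem_K0]
  exact ⟨⟨by simp [Matrix.det_fin_two_of, ha, hd], by simp⟩, by simp⟩

/-- For `0 ≤ m ≤ n`:
`{k ∈ K₀(pⁿ) : y(p^m)⁻¹ k y(p^m) ∈ K₀(pⁿ)} = {(a,b;c,d) ∈ K₀(pⁿ) : a − d + p^m b ∈ p^{n−m}ℤₚ}`,
`{k ∈ K₀(pⁿ) : w⁻¹ k w ∈ K₀(pⁿ)} = {(a,b;c,d) ∈ K₀(pⁿ) : b ∈ pⁿℤₚ}`, and the latter set
contains every diagonal matrix of `K`. -/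
theorem stmt2 (p n : ℕ) [Fact p.Prime] (hn : 1 ≤ n) :
    (∀ m : ℕ, m ≤ n →
      {k : Matrix (Fin 2) (Fin 2) ℤ_[p] |
          k ∈ K0 p n ∧ (yMat p ((p : ℤ_[p]) ^ m))⁻¹ * k * yMat p ((p : ℤ_[p]) ^ m) ∈ K0 p n} =
        {k : Matrix (Fin 2) (Fin 2) ℤ_[p] |
          k ∈ K0 p n ∧ (p : ℤ_[p]) ^ (n - m) ∣ (k 0 0 - k 1 1 + (p : ℤ_[p]) ^ m * k 0 1)}) ∧
    ({k : Matrix (Fin 2) (Fin 2) ℤ_[p] |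
          k ∈ K0 p n ∧ (wMat p)⁻¹ * k * wMat p ∈ K0 p n} =
        {k : Matrix (Fin 2) (Fin 2) ℤ_[p] |
          k ∈ K0 p n ∧ (p : ℤ_[p]) ^ n ∣ k 0 1}) ∧
    (∀ a d : ℤ_[p], IsUnit a → IsUnit d →
      (!![a, 0; 0, d] : Matrix (Fin 2) (Fin 2) ℤ_[p]) ∈
        {k : Matrix (Fin 2) (Fin 2) ℤ_[p] |
          k ∈ K0 p n ∧ (wMat p)⁻¹ * k * wMat p ∈ K0 p n}) :=
  stmt2_general p n
end

section
/- (i) For each m with 1 ≤ m ≤ n, the identity χ(y(p^m) k y(p^m)⁻¹) = χ(k) holds for every k ∈ K₀(pⁿ) satisfying y(p^m) k y(p^m)⁻¹ ∈ K₀(pⁿ) if and only if r ≤ m. (ii) There exists k ∈ K₀(pⁿ) with w k w⁻¹ ∈ K₀(pⁿ) and χ(w k w⁻¹) ≠ χ(k). Consequently, the Hecke algebra ℋ(K//K₀(pⁿ),χ) of functions f : K → ℂ satisfying f(k₁ x k₂) = χ(k₁)χ(k₂) f(x) for all k₁,k₂ ∈ K₀(pⁿ) is supported exactly on the double cosets of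 y(p^r), y(p^{r+1}), …, y(pⁿ). -/
/-- The extension of a character `χ : ℤₚˣ → ℂˣ` to matrices, by `χ((a,b;c,d)) = χ(d)`
(defined to be `0` when the `d`-entry is not a unit; for matrices in `K₀(pⁿ)` the
`d`-entry is a unit, so this agrees with the extension in the paper). -/
noncomputable def chiExt (p : ℕ) [Fact p.Prime] (χ : ℤ_[p]ˣ →* ℂˣ)
    (g : Matrix (Fin 2) (Fin 2) ℤ_[p]) : ℂ :=
  letI := Classical.dec (IsUnit (g 1 1))
  if h : IsUnit (g 1 1) then (χ h.unit : ℂ) else 0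

open Matrix

namespace Stmt3Aux

variable {p : ℕ} [Fact p.Prime]

lemma unit_or_dvd (x : ℤ_[p]) : IsUnit x ∨ (p:ℤ_[p]) ∣ x := by
  rcases eq_or_lt_of_le (PadicInt.norm_le_one x) with h | h
  · exact Or.inl (PadicInt.isUnit_iff.2 h)
  · exact Or.inr ((PadicInt.norm_lt_one_iff_dvd x).1 h)

lemma not_unit_p : ¬ IsUnit (p:ℤ_[p]) := by
  rw [PadicInt.isUnit_iff, PadicInt.norm_p]
  have h := (Fact.out : p.Prime).one_lt
  have : (1:ℝ) < (p:ℝ) := by exact_mod_cast h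
  intro hc
  rw [inv_eq_one] at hc
  exact absurd hc (by linarith)

lemma not_unit_of_dvd {x : ℤ_[p]} (h : (p:ℤ_[p]) ∣ x) : ¬ IsUnit x := by
  intro hu
  exact not_unit_p (isUnit_of_dvd_unit h hu)

lemma isUnit_add_of {x y : ℤ_[p]} (hx : IsUnit x) (hy : (p:ℤ_[p]) ∣ y) : IsUnit (x + y) := by
  by_contra h
  have h1 : x + y ∈ nonunits ℤ_[p] := h
  have h2 : -y ∈ nonunits ℤ_[p] := by
    simpa [nonunits] using not_unit_of_dvd (dvd_neg.2 hy)
  have := IsLocalRing.nonunits_add h1 h2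
  simp only [add_neg_cancel_right] at this
  exact this hx

lemma yM_mul_yM (t : ℤ_[p]) : yMat p (-t) * yMat p t = 1 := by
  simp [yMat, Matrix.mul_fin_two, Matrix.one_fin_two]

lemma yM_mul_yM' (t : ℤ_[p]) : yMat p t * yMat p (-t) = 1 := by
  simp [yMat, Matrix.mul_fin_two, Matrix.one_fin_two]

lemma yM_inv (t : ℤ_[p]) : (yMat p t)⁻¹ = yMat p (-t) :=
  Matrix.inv_eq_right_inv (yM_mul_yM' t)

lemma det_yM (t : ℤ_[p]) : (yMat p t).det = 1 := by
  simp [yMat, Matrix.det_fin_two_of]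

lemma conj11 (t : ℤ_[p]) (k : Matrix (Fin 2) (Fin 2) ℤ_[p]) :
    (yMat p t * k * yMat p (-t)) 1 1 = k 1 1 + t * k 0 1 := by
  rw [Matrix.eta_fin_two k]
  simp [yMat, Matrix.mul_fin_two]
  ring

lemma mul_apply_10 (A B : Matrix (Fin 2) (Fin 2) ℤ_[p]) :
    (A * B) 1 0 = A 1 0 * B 0 0 + A 1 1 * B 1 0 := by
  simp [Matrix.mul_apply, Fin.sum_univ_two]

lemma mul_apply_11 (A B : Matrix (Fin 2) (Fin 2) ℤ_[p]) :
    (A * B) 1 1 = A 1 0 * B 0 1 + A 1 1 * B 1 1 := by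
  simp [Matrix.mul_apply, Fin.sum_univ_two]

variable {n r : ℕ} {χ : ℤ_[p]ˣ →* ℂˣ}

lemma chiExt_of_unit (u : ℤ_[p]ˣ) {g : Matrix (Fin 2) (Fin 2) ℤ_[p]} (hu : (u:ℤ_[p]) = g 1 1) :
    chiExt p χ g = χ u := by
  have h : IsUnit (g 1 1) := ⟨u, hu⟩
  rw [chiExt, dif_pos h]
  congr 1
  exact congrArg χ (Units.ext (by rw [IsUnit.unit_spec, hu]))

lemma chiExt_one : chiExt p χ (1 : Matrix (Fin 2) (Fin 2) ℤ_[p]) = 1 := by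
  rw [chiExt_of_unit 1 (by simp), _root_.map_one, Units.val_one]

lemma chi_congr (hχ₁ : ∀ u : ℤ_[p]ˣ, (p : ℤ_[p]) ^ r ∣ ((u : ℤ_[p]) - 1) → χ u = 1)
    (u v : ℤ_[p]ˣ) (h : (p:ℤ_[p]) ^ r ∣ ((u:ℤ_[p]) - v)) : χ u = χ v := by
  have h1 : (p:ℤ_[p]) ^ r ∣ ((↑(u * v⁻¹) : ℤ_[p]) - 1) := by
    have : ((↑(u * v⁻¹) : ℤ_[p]) - 1) = ((u:ℤ_[p]) - v) * ↑v⁻¹ := by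
      push_cast
      rw [sub_mul, Units.mul_inv]
    rw [this]
    exact Dvd.dvd.mul_right h _
  have := hχ₁ _ h1
  rw [_root_.map_mul, map_inv, mul_inv_eq_one] at this
  exact this

lemma chiExt_congr (hχ₁ : ∀ u : ℤ_[p]ˣ, (p : ℤ_[p]) ^ r ∣ ((u : ℤ_[p]) - 1) → χ u = 1)
    {g h : Matrix (Fin 2) (Fin 2) ℤ_[p]} (hg : IsUnit (g 1 1)) (hh : IsUnit (h 1 1))
    (hd : (p:ℤ_[p]) ^ r ∣ (g 1 1 - h 1 1)) : chiExt p χ g = chiExt p χ h := by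
  rw [chiExt_of_unit hg.unit hg.unit_spec, chiExt_of_unit hh.unit hh.unit_spec]
  have := chi_congr hχ₁ hg.unit hh.unit (by simp only [IsUnit.unit_spec]; exact hd)
  rw [this]

lemma K0_unit11 (hn : 1 ≤ n) {k : Matrix (Fin 2) (Fin 2) ℤ_[p]} (hk : k ∈ K0 p n) :
    IsUnit (k 1 1) := by
  obtain ⟨hdet, hdvd⟩ := hk
  rcases unit_or_dvd (k 1 1) with h | h
  · exact h
  exfalso
  refine not_unit_of_dvd ?_ hdet
  rw [Matrix.det_fin_two]
  have h10 : (p:ℤ_[p]) ∣ k 1 0 := dvd_trans (dvd_pow_self _ (by omega : n ≠ 0)) hdvd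
  exact dvd_sub (Dvd.dvd.mul_left h _) (Dvd.dvd.mul_left h10 _)

lemma chiExt_ne_zero (hn : 1 ≤ n) {k : Matrix (Fin 2) (Fin 2) ℤ_[p]} (hk : k ∈ K0 p n) :
    chiExt p χ k ≠ 0 := by
  have h := K0_unit11 hn hk
  rw [chiExt_of_unit h.unit h.unit_spec]
  exact Units.ne_zero _

lemma K0_mul {A B : Matrix (Fin 2) (Fin 2) ℤ_[p]} (hA : A ∈ K0 p n) (hB : B ∈ K0 p n) :
    A * B ∈ K0 p n := by
  refine ⟨by rw [Matrix.det_mul]; exact hA.1.mul hB.1, ?_⟩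
  rw [mul_apply_10]
  exact dvd_add (Dvd.dvd.mul_right hA.2 _) (Dvd.dvd.mul_left hB.2 _)

lemma K0_one : (1 : Matrix (Fin 2) (Fin 2) ℤ_[p]) ∈ K0 p n := by
  refine ⟨by simp, ?_⟩
  simp [Matrix.one_apply]

lemma K0_inv {A : Matrix (Fin 2) (Fin 2) ℤ_[p]} (hA : A ∈ K0 p n) : A⁻¹ ∈ K0 p n := by
  have hinv : IsUnit (Ring.inverse A.det) := by
    rw [← hA.1.unit_spec, Ring.inverse_unit]
    exact Units.isUnit _
  refine ⟨by rw [Matrix.det_nonsing_inv]; exact hinv, ?_⟩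
  have : A⁻¹ 1 0 = Ring.inverse A.det * (-(A 1 0)) := by
    rw [Matrix.inv_def, Matrix.adjugate_fin_two]
    simp
  rw [this]
  exact Dvd.dvd.mul_left (dvd_neg.2 hA.2) _

lemma chiExt_mul (hn : 1 ≤ n) (hrn : r ≤ n)
    (hχ₁ : ∀ u : ℤ_[p]ˣ, (p : ℤ_[p]) ^ r ∣ ((u : ℤ_[p]) - 1) → χ u = 1)
    {A B : Matrix (Fin 2) (Fin 2) ℤ_[p]} (hA : A ∈ K0 p n) (hB : B ∈ K0 p n) :
    chiExt p χ (A * B) = chiExt p χ A * chiExt p χ B := by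
  have hA1 := K0_unit11 hn hA
  have hB1 := K0_unit11 hn hB
  have hAB : (A * B) 1 1 = A 1 1 * B 1 1 + A 1 0 * B 0 1 := by
    rw [mul_apply_11]; ring
  have hdvd : (p:ℤ_[p])^r ∣ A 1 0 * B 0 1 :=
    Dvd.dvd.mul_right (dvd_trans (pow_dvd_pow _ hrn) hA.2) _
  have hu : IsUnit ((A*B) 1 1) := by
    rw [hAB]
    exact isUnit_add_of (hA1.mul hB1)
      (Dvd.dvd.mul_right (dvd_trans (dvd_pow_self _ (by omega : n ≠ 0)) hA.2) _)
  rw [chiExt_of_unit hu.unit hu.unit_spec,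
      chiExt_of_unit hA1.unit hA1.unit_spec, chiExt_of_unit hB1.unit hB1.unit_spec]
  have := chi_congr hχ₁ hu.unit (hA1.unit * hB1.unit) (by
    rw [hu.unit_spec, hAB]
    push_cast
    rw [hA1.unit_spec, hB1.unit_spec]
    simpa using hdvd)
  rw [this, _root_.map_mul, Units.val_mul]

lemma K0_upper {x z b : ℤ_[p]} (h : IsUnit (x * z)) : !![x, b; 0, z] ∈ K0 p n := by
  constructor
  · rw [Matrix.det_fin_two_of]
    simpa using h
  · simp

/-- The key commutation identity: if `t*b = u - 1` then `y(t) * (u,b;0,1) = (1,b;0,u) * y(t)`. -/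
lemma key_comm (t b u : ℤ_[p]) (h : t * b = u - 1) :
    yMat p t * !![u, b; 0, 1] = !![1, b; 0, u] * yMat p t := by
  have h1 : u = t * b + 1 := by linear_combination -h
  subst h1
  ext i j
  fin_cases i <;> fin_cases j <;>
    simp [yMat, Matrix.mul_apply, Fin.sum_univ_two] <;> ring

/-- Conjugation by `y(t)` with `p^r ∣ t` does not change `chiExt` on `K₀(pⁿ)`. -/
lemma chiExt_conj (hn : 1 ≤ n) (hr : 1 ≤ r)
    (hχ₁ : ∀ u : ℤ_[p]ˣ, (p : ℤ_[p]) ^ r ∣ ((u : ℤ_[p]) - 1) → χ u = 1)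
    {k : Matrix (Fin 2) (Fin 2) ℤ_[p]} (hk : k ∈ K0 p n) {t : ℤ_[p]}
    (ht : (p:ℤ_[p])^r ∣ t) :
    chiExt p χ (yMat p t * k * yMat p (-t)) = chiExt p χ k := by
  have h11 := conj11 t k
  have hku := K0_unit11 hn hk
  have hpt : (p:ℤ_[p]) ∣ t := dvd_trans (dvd_pow_self _ (by omega : r ≠ 0)) ht
  have hu : IsUnit ((yMat p t * k * yMat p (-t)) 1 1) := by
    rw [h11]; exact isUnit_add_of hku (hpt.mul_right _)
  refine chiExt_congr hχ₁ hu hku ?_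
  rw [h11]
  simpa using ht.mul_right (k 0 1)

/-- Well-definedness of the Hecke function on a double coset `K₀ y(p^j) K₀` with `r ≤ j`. -/
lemma welldef (hn : 1 ≤ n) (hr : 1 ≤ r) (hrn : r ≤ n)
    (hχ₁ : ∀ u : ℤ_[p]ˣ, (p : ℤ_[p]) ^ r ∣ ((u : ℤ_[p]) - 1) → χ u = 1)
    {j : ℕ} (hrj : r ≤ j) {a b a' b' : Matrix (Fin 2) (Fin 2) ℤ_[p]}
    (ha : a ∈ K0 p n) (hb : b ∈ K0 p n) (ha' : a' ∈ K0 p n) (hb' : b' ∈ K0 p n)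
    (h : a * yMat p ((p:ℤ_[p])^j) * b = a' * yMat p ((p:ℤ_[p])^j) * b') :
    chiExt p χ a * chiExt p χ b = chiExt p χ a' * chiExt p χ b' := by
  set t : ℤ_[p] := (p:ℤ_[p])^j with ht
  set Y := yMat p t with hY
  set k := a'⁻¹ * a with hk
  set k' := b' * b⁻¹ with hk'
  have hkK : k ∈ K0 p n := K0_mul (K0_inv ha') ha
  have hk'K : k' ∈ K0 p n := K0_mul hb' (K0_inv hb)
  have hky : k * Y = Y * k' := by
    have h1 : a'⁻¹ * (a * Y * b) * b⁻¹ = k * Y := by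
      simp only [hk, Matrix.mul_assoc]
      rw [Matrix.mul_nonsing_inv _ hb.1, Matrix.mul_one]
    have h2 : a'⁻¹ * (a' * Y * b') * b⁻¹ = Y * k' := by
      simp only [hk', Matrix.mul_assoc]
      rw [Matrix.nonsing_inv_mul_cancel_left _ _ ha'.1]
    rw [← h1, h, h2]
  have hk'eq : k' = yMat p (-t) * k * yMat p t := by
    rw [← hY, Matrix.mul_assoc, hky, ← Matrix.mul_assoc, hY, yM_mul_yM, Matrix.one_mul]
  have hchi : chiExt p χ k' = chiExt p χ k := by
    rw [hk'eq]
    have := chiExt_conj hn hr hχ₁ hkK (t := -t)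
      (by rw [ht]; exact (pow_dvd_pow _ hrj).neg_right)
    rw [neg_neg] at this
    exact this
  have hak : a' * k = a := Matrix.mul_nonsing_inv_cancel_left _ _ ha'.1
  have hkb : k' * b = b' := Matrix.nonsing_inv_mul_cancel_right _ _ hb.1
  calc chiExt p χ a * chiExt p χ b
      = chiExt p χ (a' * k) * chiExt p χ b := by rw [hak]
    _ = chiExt p χ a' * chiExt p χ k' * chiExt p χ b := by
        rw [chiExt_mul hn hrn hχ₁ ha' hkK, hchi]
    _ = chiExt p χ a' * chiExt p χ (k' * b) := by
        rw [chiExt_mul hn hrn hχ₁ hk'K hb]; ring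
    _ = chiExt p χ a' * chiExt p χ b' := by rw [hkb]

/-- Decomposition: an element of `GL₂(ℤₚ)` whose lower-left entry is `p^j u` with `u` a unit
lies in the double coset `K₀(pⁿ) y(p^j) K₀(pⁿ)`. -/
lemma decomp (hn : 1 ≤ n) {g : Matrix (Fin 2) (Fin 2) ℤ_[p]} (hg : IsUnit g.det)
    (j : ℕ) {u : ℤ_[p]} (huu : IsUnit u) (hc : g 1 0 = (p:ℤ_[p])^j * u) :
    ∃ k1 ∈ K0 p n, ∃ k2 ∈ K0 p n, g = k1 * yMat p ((p:ℤ_[p])^j) * k2 := by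
  set t : ℤ_[p] := (p:ℤ_[p])^j with ht
  have hbeta : ∃ β : ℤ_[p], IsUnit (g 1 0 * β + g 1 1) := by
    by_cases hd : IsUnit (g 1 1)
    · exact ⟨0, by simpa using hd⟩
    · have hdp : (p:ℤ_[p]) ∣ g 1 1 := (unit_or_dvd _).resolve_left hd
      have hcu : IsUnit (g 1 0) := by
        rcases unit_or_dvd (g 1 0) with h | h
        · exact h
        exfalso
        refine not_unit_of_dvd ?_ hg
        rw [Matrix.det_fin_two]
        exact dvd_sub (Dvd.dvd.mul_left hdp _) (Dvd.dvd.mul_left h _)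
      exact ⟨1, by rw [mul_one]; exact isUnit_add_of hcu hdp⟩
  obtain ⟨β, hα⟩ := hbeta
  set α : ℤ_[p] := ↑huu.unit⁻¹ * (g 1 0 * β + g 1 1) with hαdef
  have hαu : IsUnit α := (Units.isUnit _).mul hα
  set B : Matrix (Fin 2) (Fin 2) ℤ_[p] := !![α, β; 0, 1] with hBdef
  have hBdet : B.det = α := by rw [hBdef, Matrix.det_fin_two_of]; ring
  have hBdetu : IsUnit B.det := hBdet ▸ hαu
  have hBK : B ∈ K0 p n := ⟨hBdetu, by rw [hBdef]; simp⟩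
  refine ⟨g * B * yMat p (-t), ⟨?_, ?_⟩, B⁻¹, K0_inv hBK, ?_⟩
  · rw [Matrix.det_mul, Matrix.det_mul, det_yM, mul_one]
    exact hg.mul hBdetu
  · have e1 : (g * B) 1 0 = g 1 0 * α := by
      rw [mul_apply_10, hBdef]; simp
    have e2 : (g * B) 1 1 = g 1 0 * β + g 1 1 := by
      rw [mul_apply_11, hBdef]; simp
    have e3 : (g * B * yMat p (-t)) 1 0 = (g * B) 1 0 + (g * B) 1 1 * (-t) := by
      rw [mul_apply_10, yMat]; simp
    have h5 : u * ↑huu.unit⁻¹ = (1:ℤ_[p]) := huu.mul_val_inv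
    have e4 : g 1 0 * α = t * (g 1 0 * β + g 1 1) := by
      rw [hαdef, hc]
      linear_combination (t * (t * u * β + g 1 1)) * h5
    have e5 : (g * B * yMat p (-t)) 1 0 = 0 := by
      rw [e3, e1, e2, e4]; ring
    rw [e5]
    exact dvd_zero _
  · rw [Matrix.mul_assoc (g * B), yM_mul_yM, Matrix.mul_one,
      Matrix.mul_nonsing_inv_cancel_right B g hBdetu]

/-- The Hecke function supported on `K₀ Y K₀`. -/
noncomputable def heckeF (p : ℕ) [Fact p.Prime] (n : ℕ) (χ : ℤ_[p]ˣ →* ℂˣ)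
    (Y : Matrix (Fin 2) (Fin 2) ℤ_[p]) (x : Matrix (Fin 2) (Fin 2) ℤ_[p]) : ℂ :=
  letI := Classical.dec (∃ a b : Matrix (Fin 2) (Fin 2) ℤ_[p],
      a ∈ K0 p n ∧ b ∈ K0 p n ∧ x = a * Y * b)
  if h : ∃ a b : Matrix (Fin 2) (Fin 2) ℤ_[p], a ∈ K0 p n ∧ b ∈ K0 p n ∧ x = a * Y * b
  then chiExt p χ h.choose * chiExt p χ h.choose_spec.choose else 0

lemma heckeF_pos {Y x : Matrix (Fin 2) (Fin 2) ℤ_[p]}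
    (h : ∃ a b : Matrix (Fin 2) (Fin 2) ℤ_[p], a ∈ K0 p n ∧ b ∈ K0 p n ∧ x = a * Y * b) :
    ∃ a b : Matrix (Fin 2) (Fin 2) ℤ_[p], a ∈ K0 p n ∧ b ∈ K0 p n ∧ x = a * Y * b ∧
      heckeF p n χ Y x = chiExt p χ a * chiExt p χ b := by
  obtain ⟨h1, h2, h3⟩ := h.choose_spec.choose_spec
  exact ⟨h.choose, h.choose_spec.choose, h1, h2, h3, by rw [heckeF, dif_pos h]⟩

lemma heckeF_neg {Y x : Matrix (Fin 2) (Fin 2) ℤ_[p]}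
    (h : ¬ ∃ a b : Matrix (Fin 2) (Fin 2) ℤ_[p], a ∈ K0 p n ∧ b ∈ K0 p n ∧ x = a * Y * b) :
    heckeF p n χ Y x = 0 := by
  rw [heckeF, dif_neg h]

end Stmt3Aux

open Stmt3Aux in
/-- (i) For `1 ≤ m ≤ n`, `χ(y(p^m) k y(p^m)⁻¹) = χ(k)` holds for all admissible
`k ∈ K₀(pⁿ)` iff `r ≤ m`; (ii) this fails for `w`; consequently the Hecke algebra
`ℋ(K//K₀(pⁿ),χ)` is supported exactly on the double cosets of `y(p^r), …, y(pⁿ)`. -/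
theorem stmt3 (p n r : ℕ) [Fact p.Prime] (hn : 1 ≤ n) (hr : 1 ≤ r) (hrn : r ≤ n)
    (χ : ℤ_[p]ˣ →* ℂˣ)
    (hχ₁ : ∀ u : ℤ_[p]ˣ, (p : ℤ_[p]) ^ r ∣ ((u : ℤ_[p]) - 1) → χ u = 1)
    (hχ₂ : ∃ u : ℤ_[p]ˣ, (p : ℤ_[p]) ^ (r - 1) ∣ ((u : ℤ_[p]) - 1) ∧ χ u ≠ 1) :
    (∀ m : ℕ, 1 ≤ m → m ≤ n →
      ((∀ k ∈ K0 p n,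
          yMat p ((p : ℤ_[p]) ^ m) * k * (yMat p ((p : ℤ_[p]) ^ m))⁻¹ ∈ K0 p n →
          chiExt p χ (yMat p ((p : ℤ_[p]) ^ m) * k * (yMat p ((p : ℤ_[p]) ^ m))⁻¹) =
            chiExt p χ k) ↔ r ≤ m)) ∧
    (∃ k ∈ K0 p n, wMat p * k * (wMat p)⁻¹ ∈ K0 p n ∧
        chiExt p χ (wMat p * k * (wMat p)⁻¹) ≠ chiExt p χ k) ∧
    (∀ g ∈ Kfull p,
      ((∃ f : Matrix (Fin 2) (Fin 2) ℤ_[p] → ℂ,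
          (∀ k₁ ∈ K0 p n, ∀ k₂ ∈ K0 p n, ∀ x : Matrix (Fin 2) (Fin 2) ℤ_[p],
            f (k₁ * x * k₂) = chiExt p χ k₁ * chiExt p χ k₂ * f x) ∧ f g ≠ 0) ↔
        (∃ j : ℕ, r ≤ j ∧ j ≤ n ∧
          ∃ k₁ ∈ K0 p n, ∃ k₂ ∈ K0 p n, g = k₁ * yMat p ((p : ℤ_[p]) ^ j) * k₂))) := by
  refine ⟨?_, ?_, ?_⟩
  · -- Part (i)
    intro m hm1 hmn
    constructor
    · intro hall
      by_contra hmr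
      push_neg at hmr
      obtain ⟨u, hu1, hu2⟩ := hχ₂
      have hdvd : (p:ℤ_[p])^m ∣ ((u:ℤ_[p]) - 1) :=
        dvd_trans (pow_dvd_pow _ (by omega : m ≤ r - 1)) hu1
      obtain ⟨b, hb⟩ := hdvd
      set t : ℤ_[p] := (p:ℤ_[p])^m with htdef
      have hcomm := key_comm t b (u:ℤ_[p]) hb.symm
      have hkK : !![(u:ℤ_[p]), b; 0, 1] ∈ K0 p n := K0_upper (by simpa using u.isUnit)
      have hCK : !![(1:ℤ_[p]), b; 0, (u:ℤ_[p])] ∈ K0 p n := K0_upper (by simpa using u.isUnit)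
      have hconj : yMat p t * !![(u:ℤ_[p]), b; 0, 1] * (yMat p t)⁻¹ =
          !![(1:ℤ_[p]), b; 0, (u:ℤ_[p])] := by
        rw [yM_inv, hcomm, Matrix.mul_assoc, yM_mul_yM', Matrix.mul_one]
      have hres := hall _ hkK (by rw [hconj]; exact hCK)
      rw [hconj, chiExt_of_unit u (by simp), chiExt_of_unit 1 (by simp)] at hres
      rw [_root_.map_one, Units.val_one] at hres
      exact hu2 (Units.val_eq_one.mp hres)
    · intro hrm k hk _
      rw [yM_inv]
      exact chiExt_conj hn hr hχ₁ hk (pow_dvd_pow _ hrm)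
  · -- Part (ii)
    obtain ⟨u, hu1, hu2⟩ := hχ₂
    have hwinv : (wMat p)⁻¹ = !![0, 1; -1, 0] :=
      Matrix.inv_eq_right_inv (by simp [wMat, Matrix.mul_fin_two, Matrix.one_fin_two])
    have hconj : wMat p * !![(u:ℤ_[p]), 0; 0, 1] * (wMat p)⁻¹ =
        !![(1:ℤ_[p]), 0; 0, (u:ℤ_[p])] := by
      rw [hwinv]
      simp [wMat, Matrix.mul_fin_two]
    refine ⟨!![(u:ℤ_[p]), 0; 0, 1], K0_upper (by simpa using u.isUnit), ?_, ?_⟩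
    · rw [hconj]; exact K0_upper (by simpa using u.isUnit)
    · rw [hconj, chiExt_of_unit u (by simp), chiExt_of_unit 1 (by simp),
        _root_.map_one, Units.val_one]
      intro h
      exact hu2 (Units.val_eq_one.mp h)
  · -- Part (iii)
    intro g hg
    have hgdet : IsUnit g.det := hg
    constructor
    · rintro ⟨f, hf, hfg⟩
      by_cases hc : (p:ℤ_[p])^n ∣ g 1 0
      · refine ⟨n, hrn, le_refl n, g * yMat p (-((p:ℤ_[p])^n)), ⟨?_, ?_⟩, 1, K0_one, ?_⟩
        · rw [Matrix.det_mul, det_yM, mul_one]; exact hgdet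
        · have e : (g * yMat p (-((p:ℤ_[p])^n))) 1 0 =
              g 1 0 + g 1 1 * (-((p:ℤ_[p])^n)) := by
            rw [mul_apply_10, yMat]; simp
          rw [e]
          exact dvd_add hc (Dvd.dvd.mul_left (dvd_neg.2 dvd_rfl) _)
        · rw [Matrix.mul_one, Matrix.mul_assoc, yM_mul_yM, Matrix.mul_one]
      · have hex : ∃ k, ¬ (p:ℤ_[p])^k ∣ g 1 0 := ⟨n, hc⟩
        classical
        obtain ⟨m, hm1, hmn, hj0, hspec⟩ :
            ∃ m : ℕ, 1 ≤ m ∧ m ≤ n ∧ (p:ℤ_[p])^(m-1) ∣ g 1 0 ∧ ¬ (p:ℤ_[p])^m ∣ g 1 0 := by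
          have hpos : 1 ≤ Nat.find hex := by
            by_contra h
            push_neg at h
            have h0 : Nat.find hex = 0 := by omega
            have hsp := Nat.find_spec hex
            rw [h0, pow_zero] at hsp
            exact hsp (one_dvd _)
          exact ⟨Nat.find hex, hpos, Nat.find_min' hex hc,
            not_not.mp (Nat.find_min hex (by omega)), Nat.find_spec hex⟩
        obtain ⟨u, hu⟩ := hj0
        have huu : IsUnit u := by
          rcases unit_or_dvd u with h | h
          · exact h
          exfalso
          apply hspec
          obtain ⟨v, hv⟩ := h
          have hpm : (p:ℤ_[p])^m = (p:ℤ_[p])^(m-1) * p := by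
            rw [← pow_succ]; congr 1; omega
          exact ⟨v, by rw [hu, hv, hpm]; ring⟩
        obtain ⟨k1, hk1, k2, hk2, hgd⟩ := decomp (n := n) hn hgdet (m-1) huu hu
        refine ⟨m - 1, ?_, by omega, k1, hk1, k2, hk2, hgd⟩
        by_contra hjr
        push_neg at hjr
        set t : ℤ_[p] := (p:ℤ_[p])^(m-1) with htdef
        have hyne : f (yMat p t) ≠ 0 := by
          intro h0
          apply hfg
          rw [hgd, hf k1 hk1 k2 hk2 (yMat p t), h0, mul_zero]
        obtain ⟨u', hu'1, hu'2⟩ := hχ₂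
        have hdvd : t ∣ ((u':ℤ_[p]) - 1) := by
          rw [htdef]
          exact dvd_trans (pow_dvd_pow _ (by omega : m - 1 ≤ r - 1)) hu'1
        obtain ⟨b, hb⟩ := hdvd
        have hcomm := key_comm t b (u':ℤ_[p]) hb.symm
        have hkK : !![(u':ℤ_[p]), b; 0, 1] ∈ K0 p n := K0_upper (by simpa using u'.isUnit)
        have hCK : !![(1:ℤ_[p]), b; 0, (u':ℤ_[p])] ∈ K0 p n := K0_upper (by simpa using u'.isUnit)
        have e1 := hf 1 K0_one _ hkK (yMat p t)
        have e2 := hf _ hCK 1 K0_one (yMat p t)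
        rw [Matrix.one_mul] at e1
        rw [Matrix.mul_one, ← hcomm] at e2
        rw [chiExt_one, chiExt_of_unit u' (by simp)] at e2
        rw [chiExt_one, chiExt_of_unit 1 (by simp)] at e1
        rw [_root_.map_one, Units.val_one] at e1
        have hfe := e1.symm.trans e2
        rw [one_mul, one_mul, mul_one] at hfe
        have h2 : (((χ u' : ℂˣ) : ℂ) - 1) * f (yMat p t) = 0 := by
          linear_combination -hfe
        rcases mul_eq_zero.mp h2 with h3 | h3
        · exact hu'2 (Units.val_eq_one.mp (sub_eq_zero.mp h3))
        · exact hyne h3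
    · rintro ⟨j, hrj, hjn, k1, hk1, k2, hk2, hgd⟩
      classical
      set Y := yMat p ((p:ℤ_[p])^j) with hY
      refine ⟨heckeF p n χ Y, ?_, ?_⟩
      · intro q1 hq1 q2 hq2 x
        by_cases hP : ∃ a b : Matrix (Fin 2) (Fin 2) ℤ_[p],
            a ∈ K0 p n ∧ b ∈ K0 p n ∧ x = a * Y * b
        · obtain ⟨a, b, ha, hb, hx⟩ := hP
          obtain ⟨a1, b1, ha1, hb1, hx1, hval1⟩ := heckeF_pos (Y := Y) (x := q1 * x * q2)
            ⟨q1 * a, b * q2, K0_mul hq1 ha, K0_mul hb hq2, by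
              rw [hx]; simp only [Matrix.mul_assoc]⟩
          obtain ⟨a2, b2, ha2, hb2, hx2, hval2⟩ :=
            heckeF_pos (Y := Y) (x := x) ⟨a, b, ha, hb, hx⟩
          rw [hval1, hval2]
          have w1 := welldef hn hr hrn hχ₁ hrj ha1 hb1 (K0_mul hq1 ha) (K0_mul hb hq2)
            (by rw [← hY, ← hx1, hx]; simp only [Matrix.mul_assoc])
          have w2 := welldef hn hr hrn hχ₁ hrj ha2 hb2 ha hb (by rw [← hY, ← hx2, hx])
          rw [w1, w2, chiExt_mul hn hrn hχ₁ hq1 ha, chiExt_mul hn hrn hχ₁ hb hq2]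
          ring
        · rw [heckeF_neg hP, heckeF_neg ?_, mul_zero]
          rintro ⟨a, b, ha, hb, he⟩
          apply hP
          refine ⟨q1⁻¹ * a, b * q2⁻¹, K0_mul (K0_inv hq1) ha, K0_mul hb (K0_inv hq2), ?_⟩
          have hx : x = q1⁻¹ * (q1 * x * q2) * q2⁻¹ := by
            rw [Matrix.mul_assoc q1 x q2, Matrix.nonsing_inv_mul_cancel_left _ _ hq1.1,
              Matrix.mul_nonsing_inv_cancel_right _ _ hq2.1]
          rw [hx, he]
          simp only [Matrix.mul_assoc]
      · obtain ⟨a2, b2, ha2, hb2, hx2, hval2⟩ :=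
          heckeF_pos (Y := Y) (x := g) ⟨k1, k2, hk1, hk2, hgd⟩
        rw [hval2]
        exact mul_ne_zero (chiExt_ne_zero hn ha2) (chiExt_ne_zero hn hb2)
end
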